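/- arXiv:2011.06942 — 2 statements merged into one kernel-verified Lean document; each statement's English description precedes it below -/
import Mathlib

section
/- Let q be a prime power and F a finite field with |F| = q. There exists a 2-code of S_{3,q} of size (q² − 1)(q² + q + 1) + 1; that is, a set C of 3×3 symmetric matrices over F with |C| = (q² − 1)(q² + q + 1) + 1 such that rank(A − B) ≥ 2 for all distinct A, B ∈ C. -/
open Matrix

namespace TwoCodeS3q

variable {F : Type} [Field F]

/-- Index type for the q^2+q+1 planes in F^3. -/
abbrev Idx (F : Type) := (F × F) ⊕ (F ⊕ Unit)

/-- Basis matrix of each plane (columns span the plane). -/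
def Pm : Idx F → Matrix (Fin 3) (Fin 2) F
  | .inl (α, β) => !![1, 0; 0, 1; α, β]
  | .inr (.inl α) => !![1, 0; α, 0; 0, 1]
  | .inr (.inr _) => !![0, 0; 1, 0; 0, 1]

/-- Left inverse of the basis matrix. -/
def Qm : Idx F → Matrix (Fin 2) (Fin 3) F
  | .inl _ => !![1, 0, 0; 0, 1, 0]
  | .inr (.inl _) => !![1, 0, 0; 0, 0, 1]
  | .inr (.inr _) => !![0, 1, 0; 0, 0, 1]

/-- Normal vector of each plane. -/
def nv : Idx F → (Fin 3 → F)
  | .inl (α, β) => ![-α, -β, 1]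
  | .inr (.inl α) => ![-α, 1, 0]
  | .inr (.inr _) => ![1, 0, 0]

/-- The 2x2 symmetric "spread set" matrices. -/
def Bm (a : F) (v : F × F) : Matrix (Fin 2) (Fin 2) F := !![v.1, v.2; v.2, a * v.1 + v.2]

lemma QP (p : Idx F) : Qm p * Pm p = 1 := by
  rcases p with ⟨α, β⟩ | α | u <;>
    · ext i j
      fin_cases i <;> fin_cases j <;>
        simp [Qm, Pm, Matrix.mul_apply, Fin.sum_univ_three, Matrix.one_apply]

lemma Pt_nv (p : Idx F) : (Pm p)ᵀ *ᵥ nv p = 0 := by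
  rcases p with ⟨α, β⟩ | α | u <;>
    · funext k
      fin_cases k <;>
        simp [Pm, nv, Matrix.mulVec, dotProduct, Fin.sum_univ_three]

lemma nv_ker {p q : Idx F} (h : (Pm p)ᵀ *ᵥ nv q = 0) : p = q := by
  have h0 := congrFun h 0
  have h1 := congrFun h 1
  rcases p with ⟨α, β⟩ | α | u <;> rcases q with ⟨α', β'⟩ | α' | u' <;>
    simp [Pm, nv, Matrix.mulVec, dotProduct, Fin.sum_univ_three] at h0 h1 <;>
    try simp_all
  · exact ⟨by linear_combination h0, by linear_combination h1⟩
  · linear_combination h0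


lemma Bm_symm (a : F) (v : F × F) : (Bm a v)ᵀ = Bm a v := by
  ext i j
  fin_cases i <;> fin_cases j <;> simp [Bm]

lemma Bm_sub (a : F) (v w : F × F) : Bm a v - Bm a w = Bm a (v - w) := by
  ext i j
  fin_cases i <;> fin_cases j <;> simp [Bm] <;> ring

lemma Bm_zero (a : F) : Bm a 0 = 0 := by
  ext i j
  fin_cases i <;> fin_cases j <;> simp [Bm]

lemma Bm_isUnit {a : F} (ha : ∀ u : F, u ^ 2 - u ≠ a) {v : F × F} (hv : v ≠ 0) :
    IsUnit (Bm a v) := by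
  rw [Matrix.isUnit_iff_isUnit_det, isUnit_iff_ne_zero]
  have hdet : (Bm a v).det = v.1 * (a * v.1 + v.2) - v.2 * v.2 := by
    simp [Bm, Matrix.det_fin_two]
  rw [hdet]
  intro hc
  by_cases h1 : v.1 = 0
  · rw [h1] at hc
    have h2 : v.2 = 0 := by
      have : v.2 * v.2 = 0 := by linear_combination -hc
      exact mul_self_eq_zero.mp this
    exact hv (Prod.ext h1 h2)
  · apply ha (v.2 / v.1)
    field_simp
    linear_combination -hc

/-- The embedded matrices. -/
def g (a : F) (p : Idx F) (v : F × F) : Matrix (Fin 3) (Fin 3) F :=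
  Pm p * Bm a v * (Pm p)ᵀ

lemma g_symm (a : F) (p : Idx F) (v : F × F) : (g a p v).IsSymm := by
  unfold Matrix.IsSymm g
  rw [Matrix.transpose_mul, Matrix.transpose_mul, Matrix.transpose_transpose, Bm_symm,
    Matrix.mul_assoc]

lemma g_sub (a : F) (p : Idx F) (v w : F × F) : g a p v - g a p w = g a p (v - w) := by
  unfold g
  rw [← Bm_sub, Matrix.mul_sub, Matrix.sub_mul]


lemma g_zero (a : F) (p : Idx F) : g a p 0 = 0 := by
  unfold g
  rw [Bm_zero, Matrix.mul_zero, Matrix.zero_mul]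

lemma sandwich (a : F) (p : Idx F) (v : F × F) : Qm p * g a p v * (Qm p)ᵀ = Bm a v := by
  unfold g
  have h1 : Qm p * (Pm p * Bm a v * (Pm p)ᵀ) * (Qm p)ᵀ
      = (Qm p * Pm p) * Bm a v * (Qm p * Pm p)ᵀ := by
    rw [Matrix.transpose_mul]
    simp only [Matrix.mul_assoc]
  rw [h1, QP, Matrix.transpose_one, Matrix.one_mul, Matrix.mul_one]

lemma two_le_rank_g {a : F} (ha : ∀ u : F, u ^ 2 - u ≠ a) (p : Idx F) {v : F × F}
    (hv : v ≠ 0) : 2 ≤ (g a p v).rank := by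
  have h1 : (Bm a v).rank = 2 := by
    rw [Matrix.rank_of_isUnit _ (Bm_isUnit ha hv), Fintype.card_fin]
  have h2 : (Qm p * g a p v * (Qm p)ᵀ).rank ≤ (g a p v).rank :=
    le_trans (Matrix.rank_mul_le_left _ _) (Matrix.rank_mul_le_right _ _)
  rw [sandwich, h1] at h2
  exact h2

lemma g_mulVec_nv (a : F) (p : Idx F) (v : F × F) : g a p v *ᵥ nv p = 0 := by
  unfold g
  rw [Matrix.mul_assoc, ← Matrix.mulVec_mulVec, ← Matrix.mulVec_mulVec, Pt_nv,
    Matrix.mulVec_zero, Matrix.mulVec_zero]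

lemma ker_nv {a : F} (ha : ∀ u : F, u ^ 2 - u ≠ a) (p : Idx F) {v : F × F} (hv : v ≠ 0)
    {z : Fin 3 → F} (hz : g a p v *ᵥ z = 0) : (Pm p)ᵀ *ᵥ z = 0 := by
  have hB := Bm_isUnit ha hv
  have hBd : IsUnit (Bm a v).det := (Matrix.isUnit_iff_isUnit_det _).mp hB
  have h1 : (Bm a v * (Pm p)ᵀ) *ᵥ z = 0 := by
    have h2 : Qm p *ᵥ (g a p v *ᵥ z) = 0 := by rw [hz, Matrix.mulVec_zero]
    rw [Matrix.mulVec_mulVec] at h2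
    unfold g at h2
    rw [show Qm p * (Pm p * Bm a v * (Pm p)ᵀ) = (Qm p * Pm p) * (Bm a v * (Pm p)ᵀ) by
      simp only [Matrix.mul_assoc], QP, Matrix.one_mul] at h2
    exact h2
  have h3 : ((Bm a v)⁻¹ * (Bm a v * (Pm p)ᵀ)) *ᵥ z = 0 := by
    rw [← Matrix.mulVec_mulVec, h1, Matrix.mulVec_zero]
  rwa [← Matrix.mul_assoc, Matrix.nonsing_inv_mul _ hBd, Matrix.one_mul] at h3


lemma two_le_rank_of_indep (M : Matrix (Fin 3) (Fin 3) F) (x y : Fin 3 → F)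
    (h : LinearIndependent F ![M *ᵥ x, M *ᵥ y]) : 2 ≤ M.rank := by
  have hsub : Set.range ![M *ᵥ x, M *ᵥ y] ⊆ (LinearMap.range M.mulVecLin : Set (Fin 3 → F)) := by
    rintro - ⟨i, rfl⟩
    fin_cases i
    · exact ⟨x, by simp [Matrix.mulVecLin_apply]⟩
    · exact ⟨y, by simp [Matrix.mulVecLin_apply]⟩
  have hspan : Submodule.span F (Set.range ![M *ᵥ x, M *ᵥ y]) ≤ LinearMap.range M.mulVecLin :=
    Submodule.span_le.mpr hsub
  have h1 : Module.finrank F (Submodule.span F (Set.range ![M *ᵥ x, M *ᵥ y])) = 2 := by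
    rw [finrank_span_eq_card h, Fintype.card_fin]
  have h2 := Submodule.finrank_mono hspan
  rw [h1] at h2
  exact h2.trans_eq rfl

lemma exists_outer (M : Matrix (Fin 3) (Fin 3) F) (h : M.rank ≤ 1) :
    ∃ u w : Fin 3 → F, ∀ i j, M i j = u i * w j := by
  by_cases hM : M = 0
  · exact ⟨0, 0, fun i j => by simp [hM]⟩
  · have : ∃ i j, M i j ≠ 0 := by
      by_contra hc
      push_neg at hc
      exact hM (by ext i j; simp [hc])
    obtain ⟨i₀, j₀, hij⟩ := this
    have hcolprop : ∀ j : Fin 3, ∃ t : F, (fun i => M i j) = t • (fun i => M i j₀) := by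
      intro j
      by_contra hc
      push_neg at hc
      have hli : LinearIndependent F ![(fun i => M i j), (fun i => M i j₀)] := by
        rw [linearIndependent_fin2]
        constructor
        · simp only [Matrix.cons_val_one, Matrix.head_cons]
          intro h0
          exact hij (congrFun h0 i₀)
        · intro t ht
          exact hc t (by simpa using ht.symm)
      have hcols : ∀ j : Fin 3, M *ᵥ Pi.single j 1 = fun i => M i j := by
        intro j
        rw [Matrix.mulVec_single]
        simp
        rfl
      have := two_le_rank_of_indep M (Pi.single j 1) (Pi.single j₀ 1)
        (by rw [hcols, hcols]; exact hli)
      omega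
    refine ⟨fun i => M i j₀, fun j => M i₀ j / M i₀ j₀, fun i j => ?_⟩
    obtain ⟨t, ht⟩ := hcolprop j
    have hti : M i j = t * M i j₀ := by have := congrFun ht i; simpa using this
    have hti₀ : M i₀ j = t * M i₀ j₀ := by have := congrFun ht i₀; simpa using this
    show M i j = M i j₀ * (M i₀ j / M i₀ j₀)
    rw [hti, hti₀]
    field_simp

lemma g_eq_plane {a : F} (ha : ∀ u : F, u ^ 2 - u ≠ a) {p q : Idx F} {v w : F × F}
    (hw : w ≠ 0) (h : g a p v = g a q w) : q = p := by
  have h1 : g a q w *ᵥ nv p = 0 := by rw [← h]; exact g_mulVec_nv a p v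
  exact nv_ker (ker_nv ha q hw h1)

lemma g_inj_v {a : F} {p : Idx F} {v w : F × F} (h : g a p v = g a p w) : v = w := by
  have hB : Bm a v = Bm a w := by
    rw [← sandwich a p v, ← sandwich a p w, h]
  have h1 := congrFun (congrFun hB 0) 0
  have h2 := congrFun (congrFun hB 0) 1
  simp [Bm] at h1 h2
  exact Prod.ext h1 h2

lemma cross_rank {a : F} (ha : ∀ u : F, u ^ 2 - u ≠ a) {p q : Idx F} {v w : F × F}
    (hv : v ≠ 0) (hw : w ≠ 0) (hpq : p ≠ q) : 2 ≤ (g a p v - g a q w).rank := by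
  by_contra hr
  push_neg at hr
  obtain ⟨u, t, hM⟩ := exists_outer _ (by omega : (g a p v - g a q w).rank ≤ 1)
  set A := g a p v with hA
  set A' := g a q w with hA'
  set M := A - A' with hMdef
  -- M is symmetric
  have hMsymm : ∀ i j, M i j = M j i := by
    intro i j
    have hs : Mᵀ = M := by
      show (A - A')ᵀ = A - A'
      rw [Matrix.transpose_sub, g_symm, g_symm]
    exact (congrFun (congrFun hs j) i).symm ▸ rfl
  -- second form of the outer product
  have hM' : ∀ i j, M i j = t i * u j := by
    intro i j
    rw [hMsymm i j, hM j i]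
    ring
  have hmulv : ∀ z : Fin 3 → F, M *ᵥ z = (t ⬝ᵥ z) • u := by
    intro z
    funext i
    simp only [Matrix.mulVec, dotProduct, Pi.smul_apply, smul_eq_mul,
      Fin.sum_univ_three]
    rw [hM i 0, hM i 1, hM i 2]
    ring
  have hmulv' : ∀ z : Fin 3 → F, M *ᵥ z = (u ⬝ᵥ z) • t := by
    intro z
    funext i
    simp only [Matrix.mulVec, dotProduct, Pi.smul_apply, smul_eq_mul,
      Fin.sum_univ_three]
    rw [hM' i 0, hM' i 1, hM' i 2]
    ring
  have hAz : A *ᵥ nv p = 0 := g_mulVec_nv a p v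
  have hA'z' : A' *ᵥ nv q = 0 := g_mulVec_nv a q w
  have hMz : M *ᵥ nv p = -(A' *ᵥ nv p) := by
    rw [hMdef, Matrix.sub_mulVec, hAz]
    simp
  by_cases hc : t ⬝ᵥ nv p = 0
  · -- A' kills nv p, so q = p
    have h0 : A' *ᵥ nv p = 0 := by
      have h1 := hmulv (nv p)
      rw [hMz, hc, zero_smul] at h1
      exact neg_eq_zero.mp h1
    exact hpq (nv_ker (ker_nv ha q hw h0)).symm
  · -- u is in the column space of A', so nv q ⬝ᵥ u = 0
    have hu : u = (-(t ⬝ᵥ nv p))⁻¹ • (A' *ᵥ nv p) := by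
      have h1 : (t ⬝ᵥ nv p) • u = -(A' *ᵥ nv p) := by rw [← hMz, hmulv]
      have h2 : (-(t ⬝ᵥ nv p)) • u = A' *ᵥ nv p := by
        rw [neg_smul, h1, neg_neg]
      rw [← h2, smul_smul, inv_mul_cancel₀ (neg_ne_zero.mpr hc), one_smul]
    have hzu : u ⬝ᵥ nv q = 0 := by
      rw [hu]
      rw [smul_dotProduct]
      have hzero : (A' *ᵥ nv p) ⬝ᵥ nv q = 0 := by
        have hvm : nv q ᵥ* A' = 0 := by
          have hs : A'ᵀ = A' := g_symm a q w
          rw [← hs, Matrix.vecMul_transpose, hA'z']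
        rw [dotProduct_comm, Matrix.dotProduct_mulVec, hvm, zero_dotProduct]
      rw [hzero, smul_zero]
    have hAz' : A *ᵥ nv q = 0 := by
      have h1 : M *ᵥ nv q = 0 := by
        rw [hmulv', hzu, zero_smul]
      have h2 : M *ᵥ nv q = A *ᵥ nv q - A' *ᵥ nv q := by
        rw [hMdef, Matrix.sub_mulVec]
      rw [h1, hA'z'] at h2
      have := h2.symm
      simpa using this
    exact hpq (nv_ker (ker_nv ha p hv hAz'))

end TwoCodeS3q

open TwoCodeS3q in
theorem two_code_S3q_exists
    (q : ℕ) (hq : IsPrimePow q)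
    (F : Type) [Field F] [Fintype F] (hF : Fintype.card F = q) :
    ∃ C : Set (Matrix (Fin 3) (Fin 3) F),
      (∀ A ∈ C, A.IsSymm) ∧
      C.ncard = (q ^ 2 - 1) * (q ^ 2 + q + 1) + 1 ∧
      (∀ A ∈ C, ∀ B ∈ C, A ≠ B → 2 ≤ (A - B).rank) := by
  classical
  obtain ⟨a, ha⟩ : ∃ a : F, ∀ u : F, u ^ 2 - u ≠ a := by
    have hni : ¬ Function.Injective (fun u : F => u ^ 2 - u) := by
      intro hinj
      have h01 : (fun u : F => u ^ 2 - u) 0 = (fun u : F => u ^ 2 - u) 1 := by norm_num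
      exact one_ne_zero (hinj h01).symm
    have hns : ¬ Function.Surjective (fun u : F => u ^ 2 - u) := fun hs =>
      hni (Finite.injective_iff_surjective.mpr hs)
    unfold Function.Surjective at hns
    push_neg at hns
    obtain ⟨a, haa⟩ := hns
    exact ⟨a, haa⟩
  set gg : (Idx F × {v : F × F // v ≠ 0}) → Matrix (Fin 3) (Fin 3) F :=
    fun z => g a z.1 z.2.1 with hgg
  have h0notin : (0 : Matrix (Fin 3) (Fin 3) F) ∉ Set.range gg := by
    rintro ⟨⟨p, v⟩, hpv⟩
    apply v.prop
    have hz : g a p v.1 = g a p 0 := by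
      rw [g_zero]
      exact hpv
    exact g_inj_v hz
  have hinj : Function.Injective gg := by
    rintro ⟨p, v⟩ ⟨p', v'⟩ h
    have h' : g a p v.1 = g a p' v'.1 := h
    have hp : p' = p := g_eq_plane ha v'.prop h'
    subst hp
    have hv : v.1 = v'.1 := g_inj_v h'
    exact Prod.ext rfl (Subtype.ext hv)
  refine ⟨insert 0 (Set.range gg), ?_, ?_, ?_⟩
  · intro A hA
    rcases Set.mem_insert_iff.mp hA with rfl | hA'
    · exact Matrix.isSymm_zero
    · obtain ⟨⟨p, v⟩, rfl⟩ := hA'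
      exact g_symm a p v.1
  · rw [Set.ncard_insert_of_notMem h0notin (Set.toFinite _)]
    have h1 : (Set.range gg).ncard = Nat.card (Idx F × {v : F × F // v ≠ 0}) := by
      rw [← Set.image_univ, Set.ncard_image_of_injective _ hinj, Set.ncard_univ]
    rw [h1, Nat.card_eq_fintype_card]
    have hFF : Fintype.card (F × F) = q ^ 2 := by rw [Fintype.card_prod, hF]; ring
    have hsub : Fintype.card {v : F × F // v ≠ 0} = q ^ 2 - 1 := by
      have := Fintype.card_subtype_compl (fun v : F × F => v = 0)
      simp only [Fintype.card_subtype_eq] at this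
      rw [hFF] at this
      convert this using 2
    have hidx : Fintype.card (Idx F) = q ^ 2 + q + 1 := by
      rw [Fintype.card_sum, Fintype.card_sum, hFF, hF, Fintype.card_unit]
      omega
    rw [Fintype.card_prod, hidx, hsub, Nat.mul_comm]
  · intro A hA B hB hne
    rcases Set.mem_insert_iff.mp hA with rfl | hA'
    · rcases Set.mem_insert_iff.mp hB with rfl | hB'
      · exact absurd rfl hne
      · obtain ⟨⟨p, v⟩, rfl⟩ := hB'
        have hdiff : (0 : Matrix (Fin 3) (Fin 3) F) - gg (p, v) = g a p (0 - v.1) := by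
          show (0 : Matrix (Fin 3) (Fin 3) F) - g a p v.1 = g a p (0 - v.1)
          rw [← g_sub, g_zero]
        rw [hdiff]
        exact two_le_rank_g ha p (sub_ne_zero.mpr (Ne.symm v.prop))
    · obtain ⟨⟨p, v⟩, rfl⟩ := hA'
      rcases Set.mem_insert_iff.mp hB with rfl | hB'
      · have hdiff : gg (p, v) - 0 = g a p v.1 := sub_zero _
        rw [hdiff]
        exact two_le_rank_g ha p v.prop
      · obtain ⟨⟨p', v'⟩, rfl⟩ := hB'
        by_cases hp : p = p'
        · subst hp
          have hvv : v.1 ≠ v'.1 := by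
            intro hc
            exact hne (by show g a p v.1 = g a p v'.1; rw [hc])
          have hdiff : gg (p, v) - gg (p, v') = g a p (v.1 - v'.1) := g_sub a p v.1 v'.1
          rw [hdiff]
          exact two_le_rank_g ha p (sub_ne_zero.mpr hvv)
        · exact cross_rank ha v.prop v'.prop hp
end

section
/- Let F be the field with 2 elements. There exists a maximal 2-code C of S_{3,2} of size 22; that is, a set C of 3×3 symmetric matrices over F with |C| = 22 such that rank(A − B) ≥ 2 for all distinct A, B ∈ C, and such that for every 3×3 symmetric matrix A over F with A ∉ C there exists B ∈ C with rank(A − B) = 1 (so C cannot be extended to a larger 2-code). -/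
/-!
The code is an explicit list of 22 symmetric matrices. Its minimum distance is certified by
a nonzero `2 × 2` minor of every difference of two codewords. It is maximal because each of
the `64 - 22` symmetric matrices outside the code differs from some codeword by `u uᵀ` with
`u ≠ 0`, a matrix of rank one. These finitely many checks are carried out by `decide`.
-/

instance : Fact (Nat.Prime 2) := ⟨by norm_num⟩

namespace Matrix

section Rank

variable {m n o K R : Type*} [Fintype n]

theorem card_le_rank_of_isUnit_det_submatrix [Fintype o] [DecidableEq o] [CommRing R]
    [StrongRankCondition R] (A : Matrix m n R) (r : o → m) (c : o → n)
    (h : IsUnit (A.submatrix r c).det) : Fintype.card o ≤ A.rank := by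
  rw [← rank_of_isUnit _ ((isUnit_iff_isUnit_det _).mpr h)]
  exact rank_submatrix_le A r c

variable [Field K]

theorem two_le_rank_of_minor_ne_zero (A : Matrix m n K) (i j : m) (k l : n)
    (h : A i k * A j l - A i l * A j k ≠ 0) : 2 ≤ A.rank := by
  simpa using card_le_rank_of_isUnit_det_submatrix A ![i, j] ![k, l]
    (by rw [det_fin_two]; simpa using h)

theorem rank_vecMulVec_eq_one {w : m → K} {v : n → K} (hw : w ≠ 0) (hv : v ≠ 0) :
    (vecMulVec w v).rank = 1 := by
  obtain ⟨i, hi⟩ := Function.ne_iff.mp hw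
  obtain ⟨j, hj⟩ := Function.ne_iff.mp hv
  refine le_antisymm (rank_vecMulVec_le w v) ?_
  simpa using card_le_rank_of_isUnit_det_submatrix (vecMulVec w v) ![i] ![j]
    (by rw [det_fin_one]; simpa [vecMulVec_apply] using mul_ne_zero hi hj)

end Rank

theorem IsSymm.exists_eq_fin_three {α : Type*} {A : Matrix (Fin 3) (Fin 3) α} (hA : A.IsSymm) :
    ∃ a b c d e f : α, A = !![a, d, e; d, b, f; e, f, c] :=
  ⟨A 0 0, A 1 1, A 2 2, A 0 1, A 0 2, A 1 2,
    (eta_fin_three A).trans (by rw [hA.apply 0 1, hA.apply 0 2, hA.apply 1 2])⟩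

end Matrix

namespace MaximalTwoCode

open Matrix

def code : Fin 22 → Matrix (Fin 3) (Fin 3) (ZMod 2) :=
  ![!![0, 0, 0; 0, 1, 0; 0, 0, 1],
    !![0, 0, 0; 0, 1, 1; 0, 1, 0],
    !![0, 0, 0; 0, 0, 1; 0, 1, 1],
    !![1, 1, 0; 1, 1, 1; 0, 1, 0],
    !![1, 0, 0; 0, 0, 0; 0, 0, 0],
    !![1, 1, 1; 1, 0, 1; 1, 1, 1],
    !![1, 0, 0; 0, 0, 1; 0, 1, 0],
    !![0, 1, 1; 1, 0, 0; 1, 0, 1],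
    !![0, 1, 0; 1, 0, 0; 0, 0, 0],
    !![0, 0, 1; 0, 1, 1; 1, 1, 0],
    !![0, 1, 0; 1, 1, 0; 0, 0, 1],
    !![0, 0, 1; 0, 0, 0; 1, 0, 0],
    !![1, 0, 1; 0, 0, 0; 1, 0, 1],
    !![1, 1, 0; 1, 1, 0; 0, 0, 0],
    !![1, 1, 1; 1, 1, 0; 1, 0, 1],
    !![0, 1, 1; 1, 0, 1; 1, 1, 0],
    !![0, 1, 1; 1, 1, 0; 1, 0, 0],
    !![0, 0, 1; 0, 1, 0; 1, 0, 1],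
    !![1, 1, 1; 1, 1, 1; 1, 1, 0],
    !![1, 1, 1; 1, 0, 0; 1, 0, 0],
    !![0, 1, 0; 1, 0, 1; 0, 1, 1],
    !![1, 0, 1; 0, 0, 1; 1, 1, 1]]

theorem code_isSymm : ∀ p, (code p).IsSymm := by
  unfold IsSymm
  decide

theorem code_injective : Function.Injective code := by
  have h : ∀ p q, code p = code q → p = q := by decide
  exact fun p q => h p q

theorem exists_minor_code_sub_ne_zero : ∀ p q, p ≠ q → ∃ i j k l : Fin 3,
    (code p - code q) i k * (code p - code q) j l -
      (code p - code q) i l * (code p - code q) j k ≠ 0 := by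
  decide

theorem exists_code_sub_eq_vecMulVec : ∀ a b c d e f : ZMod 2,
    (∀ p, code p ≠ !![a, d, e; d, b, f; e, f, c]) →
      ∃ p, ∃ u : Fin 3 → ZMod 2, u ≠ 0 ∧
        !![a, d, e; d, b, f; e, f, c] - code p = vecMulVec u u := by
  decide

end MaximalTwoCode

open MaximalTwoCode in
theorem maximal_two_code_S32_size_22 :
    ∃ C : Set (Matrix (Fin 3) (Fin 3) (ZMod 2)),
      (∀ A ∈ C, A.IsSymm) ∧
      C.ncard = 22 ∧
      (∀ A ∈ C, ∀ B ∈ C, A ≠ B → 2 ≤ (A - B).rank) ∧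
      (∀ A : Matrix (Fin 3) (Fin 3) (ZMod 2), A.IsSymm → A ∉ C →
        ∃ B ∈ C, (A - B).rank = 1) := by
  refine ⟨Set.range code, ?_, ?_, ?_, ?_⟩
  · rintro _ ⟨p, rfl⟩
    exact code_isSymm p
  · rw [Set.ncard_range_of_injective code_injective, Nat.card_eq_fintype_card, Fintype.card_fin]
  · rintro _ ⟨p, rfl⟩ _ ⟨q, rfl⟩ hne
    obtain ⟨i, j, k, l, h⟩ := exists_minor_code_sub_ne_zero p q (ne_of_apply_ne code hne)
    exact Matrix.two_le_rank_of_minor_ne_zero _ i j k l h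
  · intro A hA hAC
    obtain ⟨a, b, c, d, e, f, rfl⟩ := hA.exists_eq_fin_three
    obtain ⟨p, u, hu, h⟩ := exists_code_sub_eq_vecMulVec a b c d e f fun p hp => hAC ⟨p, hp⟩
    exact ⟨code p, ⟨p, rfl⟩, h ▸ Matrix.rank_vecMulVec_eq_one hu hu⟩
end
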